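/- arXiv:2104.00524 — 2 statements merged into one kernel-verified Lean document; each statement's English description precedes it below -/
import Mathlib

section
/- For every positive integer p ≥ 2, the quantity B_p := ζ(2p)/π^{2p} satisfies the recurrence B_p = ((−1)^{p−1}/(2p)!) · ( p/(2p+1) − Σ_{k=1}^{p−1} (−1)^{k−1} · (2p)!/(2p+1−2k)! · B_k ), with B_1 = 1/6. -/
/-!
Euler's formula `ζ(2k) = (-1)^(k+1) (2π)^(2k) b_(2k) / (2 (2k)!)` turns the recurrence into an
identity between Bernoulli numbers. Since the Bernoulli polynomial `B_(2p+1)` vanishes at `1/2`,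
expanding `2^(2p+1) B_(2p+1)(1/2) = Σ_i C(2p+1, i) 2^i b_i` and discarding the odd `b_i`
(all zero except `b_1 = -1/2`) gives `Σ_(j ≤ p) C(2p+1, 2j) 4^j b_(2j) = 2p+1`.
Solving this for its top term is the recurrence.
-/

open scoped BigOperators
open Real

noncomputable def zetaR (s : ℕ) : ℝ := ∑' n : ℕ, 1 / ((n : ℝ) + 1) ^ s
noncomputable def etaR (s : ℕ) : ℝ := ∑' n : ℕ, (-1 : ℝ) ^ n / ((n : ℝ) + 1) ^ s
noncomputable def betaR (s : ℕ) : ℝ := ∑' m : ℕ, (-1 : ℝ) ^ m / (2 * (m : ℝ) + 1) ^ s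

noncomputable def B (p : ℕ) : ℝ := zetaR (2 * p) / π ^ (2 * p)

open Finset
open scoped Nat

theorem neg_one_pow_sq {R : Type*} [Monoid R] [HasDistribNeg R] (n : ℕ) :
    ((-1 : R) ^ n) ^ 2 = 1 := by
  rw [← pow_mul, pow_mul', neg_one_sq, one_pow]

theorem Finset.sum_range_two_mul {M : Type*} [AddCommMonoid M] (f : ℕ → M) (n : ℕ) :
    ∑ i ∈ range (2 * n), f i = ∑ j ∈ range n, (f (2 * j) + f (2 * j + 1)) := by
  induction n with
  | zero => simp
  | succ n ih => rw [mul_add_one, sum_range_succ, sum_range_succ, sum_range_succ, ih, add_assoc]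

theorem sum_choose_mul_two_pow_mul_bernoulli (m : ℕ) :
    ∑ i ∈ range (m + 1), (m.choose i : ℝ) * 2 ^ i * bernoulli i = 2 ^ m * bernoulliFun m 2⁻¹ := by
  simp only [bernoulliFun, Polynomial.bernoulli, Polynomial.map_sum, Polynomial.map_monomial,
    Polynomial.eval_finsetSum, Polynomial.eval_monomial, mul_sum, eq_ratCast]
  refine sum_congr rfl fun i hi => ?_
  rw [← pow_mul_pow_sub 2 (mem_range_succ_iff.mp hi), inv_pow]
  push_cast
  field_simp

theorem sum_choose_mul_four_pow_mul_bernoulli (p : ℕ) :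
    ∑ j ∈ range (p + 1), ((2 * p + 1).choose (2 * j) : ℝ) * 4 ^ j * bernoulli (2 * j)
      = 2 * p + 1 := by
  have h := sum_choose_mul_two_pow_mul_bernoulli (2 * p + 1)
  rw [bernoulliFun_eval_half_eq_zero, mul_zero, show 2 * p + 1 + 1 = 2 * (p + 1) by ring,
    sum_range_two_mul, sum_add_distrib,
    sum_range_succ' (fun j => _ * _ * (bernoulli (2 * j + 1) : ℝ))] at h
  have hodd : ∀ j ∈ range p, ((2 * p + 1).choose (2 * (j + 1) + 1) : ℝ) * 2 ^ (2 * (j + 1) + 1)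
      * bernoulli (2 * (j + 1) + 1) = 0 := fun j _ => by
    rw [bernoulli_eq_zero_of_odd (odd_two_mul_add_one _) (by omega)]; simp
  simp only [sum_eq_zero hodd, pow_mul] at h
  norm_num at h
  linarith

theorem B_eq_bernoulli {k : ℕ} (hk : k ≠ 0) :
    B k = (-1) ^ (k + 1) * 4 ^ k * bernoulli (2 * k) / (2 * (2 * k)!) := by
  have h := (hasSum_nat_add_iff' 1).mpr (hasSum_zeta_nat hk)
  simp only [range_one, sum_singleton, Nat.cast_zero, zero_pow (mul_ne_zero two_ne_zero hk),
    div_zero, sub_zero, Nat.cast_add, Nat.cast_one] at h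
  have h4 : (2 : ℝ) * 2 ^ (2 * k - 1) = 4 ^ k := by
    rw [← pow_succ', Nat.sub_add_cancel (by omega), pow_mul]; norm_num
  rw [B, zetaR, h.tsum_eq, ← h4]
  field_simp

theorem B_one : B 1 = 1 / 6 := by
  rw [B_eq_bernoulli one_ne_zero]
  norm_num [bernoulli_two]

theorem choose_mul_four_pow_mul_bernoulli_eq {p k : ℕ} (hk : k ≠ 0) (hkp : k ≤ p) :
    ((2 * p + 1).choose (2 * k) : ℝ) * 4 ^ k * bernoulli (2 * k)
      = 2 * (2 * p + 1) * ((-1) ^ (k - 1) * ((2 * p)! / (2 * p + 1 - 2 * k)! : ℝ) * B k) := by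
  rw [B_eq_bernoulli hk, show k + 1 = k - 1 + 2 by omega, pow_add, neg_one_sq, mul_one,
    Nat.cast_choose ℝ (by omega : 2 * k ≤ 2 * p + 1), Nat.factorial_succ]
  push_cast
  field_simp
  rw [neg_one_pow_sq, mul_one]

theorem sum_Icc_neg_one_pow_mul_B (p : ℕ) :
    ∑ k ∈ Icc 1 p, (-1 : ℝ) ^ (k - 1) * ((2 * p)! / (2 * p + 1 - 2 * k)! : ℝ) * B k
      = p / (2 * p + 1) := by
  have h := sum_choose_mul_four_pow_mul_bernoulli p
  have hterms : ∀ k ∈ Icc 1 p, ((2 * p + 1).choose (2 * k) : ℝ) * 4 ^ k * bernoulli (2 * k)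
      = 2 * (2 * p + 1) * ((-1) ^ (k - 1) * ((2 * p)! / (2 * p + 1 - 2 * k)! : ℝ) * B k) :=
    fun k hk => choose_mul_four_pow_mul_bernoulli_eq (by grind) (mem_Icc.mp hk).2
  rw [sum_range_succ', range_eq_Ico,
    sum_Ico_add' (fun j => ((2 * p + 1).choose (2 * j) : ℝ) * 4 ^ j * bernoulli (2 * j)),
    zero_add, Ico_add_one_right_eq_Icc, sum_congr rfl hterms, ← mul_sum] at h
  simp only [mul_zero, Nat.choose_zero_right, Nat.cast_one, pow_zero, bernoulli_zero,
    Rat.cast_one, mul_one, add_left_inj] at h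
  rw [eq_div_iff (by positivity)]
  linear_combination h / 2

theorem stmt7 (p : ℕ) (hp : 2 ≤ p) :
    B p = ((-1 : ℝ) ^ (p - 1) / ((2 * p).factorial : ℝ)) *
        ((p : ℝ) / (2 * (p : ℝ) + 1)
          - ∑ k ∈ Finset.Icc 1 (p - 1), (-1 : ℝ) ^ (k - 1) *
              (((2 * p).factorial : ℝ) / ((2 * p + 1 - 2 * k).factorial : ℝ)) * B k)
      ∧ B 1 = 1 / 6 := by
  refine ⟨?_, B_one⟩
  obtain ⟨q, rfl⟩ : ∃ q, p = q + 1 := ⟨p - 1, by omega⟩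
  have h := sum_Icc_neg_one_pow_mul_B (q + 1)
  rw [sum_Icc_succ_top (by omega)] at h
  simp only [Nat.add_sub_cancel] at h ⊢
  rw [← h, add_sub_cancel_left, Nat.add_sub_cancel_left, Nat.factorial_one, Nat.cast_one, div_one]
  field_simp
  rw [neg_one_pow_sq, mul_one]
end

section
/- For every positive integer p, η(2p)/π^{2p} is a rational number, where η(s) = Σ_{n≥1} (−1)^{n−1}/n^s is the Dirichlet eta function. -/
open scoped BigOperators
open Real

/-!
Since the odd-indexed terms of `∑ 1/(n+1)^s` are those of the same series scaled by `2⁻ˢ`,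
flipping their sign gives `η(s) = (1 - 2¹⁻ˢ) ζ(s)`, and Euler's evaluation
`ζ(2k) = (-1)^(k+1) 2^(2k-1) π^(2k) B_{2k} / (2k)!` makes `ζ(2k) / π^(2k)` rational.
-/

open scoped Nat

theorem HasSum.alternating {α : Type*} [Ring α] [UniformSpace α] [IsUniformAddGroup α]
    [CompleteSpace α] [T2Space α] {f : ℕ → α} {a b : α} (hf : HasSum f a)
    (hodd : HasSum (fun k => f (2 * k + 1)) b) :
    HasSum (fun n => (-1) ^ n * f n) (a - 2 * b) := by
  obtain ⟨c, heven⟩ : Summable fun k => f (2 * k) :=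
    hf.summable.comp_injective (mul_right_injective₀ (two_ne_zero' ℕ))
  have hc : c + b = a := (heven.even_add_odd hodd).unique hf
  have hsum := HasSum.even_add_odd (f := fun n => (-1) ^ n * f n)
    (by simpa [pow_mul] using heven) (by simpa [pow_succ, pow_mul] using hodd.neg)
  convert hsum using 1
  rw [← hc]
  noncomm_ring

theorem etaR_eq_mul_zetaR {s : ℕ} (hs : 1 < s) : etaR s = (1 - 2 / 2 ^ s) * zetaR s := by
  set f : ℕ → ℝ := fun n => 1 / ((n : ℝ) + 1) ^ s
  have hf : HasSum f (zetaR s) := by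
    refine Summable.hasSum ?_
    simpa [f] using
      (summable_nat_add_iff 1).mpr (Real.summable_one_div_nat_pow.mpr hs)
  have hodd : HasSum (fun k => f (2 * k + 1)) (1 / 2 ^ s * zetaR s) := by
    refine (hf.mul_left (1 / 2 ^ s)).congr_fun fun k => ?_
    simp only [f]
    push_cast
    rw [show 2 * (k : ℝ) + 1 + 1 = 2 * (k + 1) by ring, mul_pow, one_div_mul_one_div]
  have h := (hf.alternating hodd).tsum_eq
  simp only [f, mul_one_div] at h
  rw [etaR, h]
  ring

theorem zetaR_two_mul {k : ℕ} (hk : k ≠ 0) :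
    zetaR (2 * k) = (-1 : ℝ) ^ (k + 1) * 2 ^ (2 * k - 1) * π ^ (2 * k) *
      bernoulli (2 * k) / (2 * k)! := by
  have h := (hasSum_nat_add_iff' 1).mpr (hasSum_zeta_nat hk)
  simp only [Finset.range_one, Finset.sum_singleton, Nat.cast_zero, Nat.cast_succ,
    zero_pow (by omega : 2 * k ≠ 0), div_zero, sub_zero] at h
  exact h.tsum_eq

theorem stmt17 (p : ℕ) (hp : 0 < p) : ∃ q : ℚ, etaR (2 * p) / π ^ (2 * p) = (q : ℝ) := by
  refine ⟨(1 - 2 / 2 ^ (2 * p)) *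
    ((-1) ^ (p + 1) * 2 ^ (2 * p - 1) * bernoulli (2 * p) / (2 * p)!), ?_⟩
  rw [etaR_eq_mul_zetaR (by omega), zetaR_two_mul hp.ne']
  have hπ : π ^ (2 * p) ≠ 0 := pow_ne_zero _ pi_ne_zero
  push_cast
  field_simp
end
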